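/- arXiv:2512.04059 — 2 statements merged into one kernel-verified Lean document; each statement's English description precedes it below -/
import Mathlib

section
/- Let (u_n) be a sequence of real numbers with inf_n u_n > 0 and let (ε_n) be a sequence of real numbers with ε_n → 0. Then there exist a constant C < ∞ and an index N such that for all n ≥ N, |Ψ(u_n + ε_n) − Ψ(u_n)·exp(−u_n ε_n)| ≤ C·(|ε_n|/u_n + ε_n²)·Ψ(u_n)·exp(−u_n ε_n). -/
open MeasureTheory

/-- The standard normal density `φ(z) = (2π)^{-1/2} exp(−z²/2)`. -/
noncomputable def phi (x : ℝ) : ℝ := (Real.sqrt (2 * Real.pi))⁻¹ * Real.exp (-x ^ 2 / 2)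

/-- The standard Gaussian survival function `Ψ(x) = ∫_x^∞ φ(z) dz`. -/
noncomputable def Psi (x : ℝ) : ℝ := ∫ z in Set.Ioi x, phi z

/-! Write `Ψ = R φ` with the Mills ratio `R = Ψ / φ`. The shift identity
`φ (u + ε) = φ u · exp (-u ε - ε² / 2)` turns the claim into a comparison of `R (u + ε) exp (-ε² / 2)`
with `R u`. Both Mills bounds `u / (1 + u²) ≤ R u ≤ 1 / u` follow from
`∫_x^∞ (1 + t⁻²) φ t dt = φ x / x`, and they give `|R' x| = |x R x - 1| ≤ 1 / (1 + x²)`. The mean value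
theorem on `[u / 2, ∞)` then bounds the relative change of `R` by `4 |ε| / u`, while `exp (-ε² / 2)`
costs at most `ε² / 2`. Since `u n` stays above a positive constant, eventually `|ε n| ≤ u n / 2`,
and `C = 4` works. -/

open Real Set Filter Topology

lemma phi_pos (x : ℝ) : 0 < phi x := by
  unfold phi
  positivity

lemma continuous_phi : Continuous phi := by
  unfold phi
  fun_prop

lemma hasDerivAt_phi (x : ℝ) : HasDerivAt phi (-(x * phi x)) x := by
  have h : HasDerivAt (fun y : ℝ => -y ^ 2 / 2) (-x) x := by
    simpa using ((hasDerivAt_pow 2 x).neg.div_const 2).congr_deriv (by ring)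
  exact ((h.exp).const_mul _).congr_deriv (by unfold phi; ring)

lemma integrable_phi : Integrable phi := by
  have h := (integrable_exp_neg_mul_sq (by norm_num : (0 : ℝ) < 1 / 2)).const_mul
    (√(2 * π))⁻¹
  refine h.congr (ae_of_all _ fun x => ?_)
  simp only [phi]
  ring_nf

lemma tendsto_phi_atTop : Tendsto phi atTop (𝓝 0) := by
  have h : Tendsto (fun x : ℝ => -x ^ 2 / 2) atTop atBot :=
    (tendsto_neg_atTop_atBot.comp (tendsto_pow_atTop two_ne_zero)).atBot_div_const two_pos
  have hphi := (tendsto_exp_atBot.comp h).const_mul (√(2 * π))⁻¹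
  rwa [mul_zero] at hphi

lemma phi_add (x e : ℝ) : phi (x + e) = phi x * exp (-(x * e) - e ^ 2 / 2) := by
  rw [phi, phi, mul_assoc, ← exp_add]
  ring_nf

lemma hasDerivAt_Psi (x : ℝ) : HasDerivAt Psi (-phi x) x := by
  have hPsi : Psi = fun y => Psi 0 - ∫ t in (0 : ℝ)..y, phi t := by
    ext y
    rw [Psi, Psi, ← intervalIntegral.integral_Ioi_sub_Ioi' integrable_phi.integrableOn
      integrable_phi.integrableOn, sub_sub_cancel]
  rw [hPsi]
  exact ((continuous_phi.integral_hasStrictDerivAt 0 x).hasDerivAt).const_sub _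

lemma hasDerivAt_neg_phi_div (x : ℝ) (hx : x ≠ 0) :
    HasDerivAt (fun t => -(phi t / t)) ((1 + (x ^ 2)⁻¹) * phi x) x :=
  ((hasDerivAt_phi x).div (hasDerivAt_id' x) hx).neg.congr_deriv (by field_simp; ring)

lemma tendsto_neg_phi_div_atTop : Tendsto (fun t => -(phi t / t)) atTop (𝓝 0) := by
  simpa [div_eq_mul_inv] using (tendsto_phi_atTop.mul tendsto_inv_atTop_zero).neg

lemma integrableOn_one_add_inv_sq_mul_phi {x : ℝ} (hx : 0 < x) :
    IntegrableOn (fun t => (1 + (t ^ 2)⁻¹) * phi t) (Ioi x) :=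
  integrableOn_Ioi_deriv_of_nonneg' (fun t ht => hasDerivAt_neg_phi_div t (hx.trans_le ht).ne')
    (fun t _ => by have := phi_pos t; positivity) tendsto_neg_phi_div_atTop

lemma integral_one_add_inv_sq_mul_phi {x : ℝ} (hx : 0 < x) :
    ∫ t in Ioi x, (1 + (t ^ 2)⁻¹) * phi t = phi x / x := by
  rw [integral_Ioi_of_hasDerivAt_of_nonneg'
    (fun t ht => hasDerivAt_neg_phi_div t (hx.trans_le ht).ne')
    (fun t _ => by have := phi_pos t; positivity) tendsto_neg_phi_div_atTop]
  ring

lemma Psi_le_phi_div {x : ℝ} (hx : 0 < x) : Psi x ≤ phi x / x := by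
  rw [← integral_one_add_inv_sq_mul_phi hx]
  refine setIntegral_mono_on integrable_phi.integrableOn
    (integrableOn_one_add_inv_sq_mul_phi hx) measurableSet_Ioi fun t _ => ?_
  have := phi_pos t
  nlinarith [inv_nonneg.2 (sq_nonneg t)]

lemma div_one_add_sq_mul_phi_le_Psi {x : ℝ} (hx : 0 < x) : x / (1 + x ^ 2) * phi x ≤ Psi x := by
  have h : phi x / x ≤ (1 + (x ^ 2)⁻¹) * Psi x := by
    rw [← integral_one_add_inv_sq_mul_phi hx, Psi, ← integral_const_mul]
    refine setIntegral_mono_on (integrableOn_one_add_inv_sq_mul_phi hx)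
      (integrable_phi.integrableOn.const_mul _) measurableSet_Ioi fun t (ht : x < t) => ?_
    have := phi_pos t
    gcongr
  have hx2 : 0 < 1 + x ^ 2 := by positivity
  rw [div_mul_eq_mul_div, div_le_iff₀ hx2]
  have h' := mul_le_mul_of_nonneg_left h (sq_nonneg x)
  field_simp at h'
  linarith

lemma Psi_nonneg (x : ℝ) : 0 ≤ Psi x :=
  setIntegral_nonneg measurableSet_Ioi fun t _ => (phi_pos t).le

noncomputable def millsRatio (x : ℝ) : ℝ := Psi x / phi x

lemma millsRatio_mul_phi (x : ℝ) : millsRatio x * phi x = Psi x :=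
  div_mul_cancel₀ _ (phi_pos x).ne'

lemma hasDerivAt_millsRatio (x : ℝ) : HasDerivAt millsRatio (x * millsRatio x - 1) x :=
  ((hasDerivAt_Psi x).div (hasDerivAt_phi x) (phi_pos x).ne').congr_deriv <| by
    have := (phi_pos x).ne'
    rw [millsRatio]
    field_simp
    ring

lemma mul_millsRatio_le_one {x : ℝ} (hx : 0 < x) : x * millsRatio x ≤ 1 := by
  have := Psi_le_phi_div hx
  rw [millsRatio, mul_div_assoc', div_le_one (phi_pos x)]
  rw [le_div_iff₀ hx] at this
  linarith

lemma div_one_add_sq_le_millsRatio {x : ℝ} (hx : 0 < x) : x / (1 + x ^ 2) ≤ millsRatio x :=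
  (le_div_iff₀ (phi_pos x)).2 (div_one_add_sq_mul_phi_le_Psi hx)

lemma abs_mul_millsRatio_sub_one_le {x : ℝ} (hx : 0 < x) :
    |x * millsRatio x - 1| ≤ (1 + x ^ 2)⁻¹ := by
  have hlow : x ^ 2 / (1 + x ^ 2) ≤ x * millsRatio x :=
    calc x ^ 2 / (1 + x ^ 2) = x * (x / (1 + x ^ 2)) := by ring
      _ ≤ x * millsRatio x := by gcongr; exact div_one_add_sq_le_millsRatio hx
  have hsplit : x ^ 2 / (1 + x ^ 2) = 1 - (1 + x ^ 2)⁻¹ := by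
    field_simp
    ring
  rw [abs_sub_comm, abs_of_nonneg (by linarith [mul_millsRatio_le_one hx])]
  linarith

lemma abs_millsRatio_add_sub_le {u ε : ℝ} (hu : 0 < u) (hε : |ε| ≤ u / 2) :
    |millsRatio (u + ε) - millsRatio u| ≤ 4 / (1 + u ^ 2) * |ε| := by
  have hderiv : ∀ x ∈ Ici (u / 2), |x * millsRatio x - 1| ≤ 4 / (1 + u ^ 2) := by
    intro x (hx : u / 2 ≤ x)
    have hx0 : 0 < x := by linarith
    refine (abs_mul_millsRatio_sub_one_le hx0).trans ?_
    rw [inv_eq_one_div, div_le_div_iff₀ (by positivity) (by positivity)]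
    nlinarith
  have hu_mem : u ∈ Ici (u / 2) := by rw [mem_Ici]; linarith
  have huε_mem : u + ε ∈ Ici (u / 2) := by rw [mem_Ici]; linarith [neg_abs_le ε]
  simpa using (convex_Ici (u / 2)).norm_image_sub_le_of_norm_hasDerivWithin_le
    (fun x _ => (hasDerivAt_millsRatio x).hasDerivWithinAt) hderiv hu_mem huε_mem

lemma abs_Psi_add_sub_le {u ε : ℝ} (hu : 0 < u) (hε : |ε| ≤ u / 2) :
    |Psi (u + ε) - Psi u * exp (-(u * ε))| ≤
      (4 * |ε| / u + ε ^ 2 / 2) * (Psi u * exp (-(u * ε))) := by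
  set g := exp (-(ε ^ 2 / 2))
  have hg0 : 0 < g := exp_pos _
  have hg1 : g ≤ 1 := exp_le_one_iff.2 (by nlinarith [sq_nonneg ε])
  have hg : 1 - g ≤ ε ^ 2 / 2 := by linarith [add_one_le_exp (-(ε ^ 2 / 2))]
  have hE : 0 < phi u * exp (-(u * ε)) := mul_pos (phi_pos u) (exp_pos _)
  have hr : 4 / (1 + u ^ 2) * |ε| ≤ millsRatio u * (4 * |ε| / u) := by
    have := div_one_add_sq_le_millsRatio hu
    rw [div_le_iff₀ (by positivity)] at this
    rw [div_mul_eq_mul_div, mul_div_assoc', div_le_div_iff₀ (by positivity) hu]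
    nlinarith [abs_nonneg ε]
  have hdiff : Psi (u + ε) - Psi u * exp (-(u * ε)) = phi u * exp (-(u * ε)) *
      ((millsRatio (u + ε) - millsRatio u) * g - millsRatio u * (1 - g)) := by
    rw [← millsRatio_mul_phi, ← millsRatio_mul_phi u, phi_add,
      show -(u * ε) - ε ^ 2 / 2 = -(u * ε) + -(ε ^ 2 / 2) by ring, exp_add]
    ring
  have hr0 : 0 ≤ millsRatio u :=
    (div_pos hu (by positivity)).le.trans (div_one_add_sq_le_millsRatio hu)
  calc |Psi (u + ε) - Psi u * exp (-(u * ε))|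
      ≤ phi u * exp (-(u * ε)) * (|millsRatio (u + ε) - millsRatio u| * g +
          millsRatio u * (1 - g)) := by
        rw [hdiff, abs_mul, abs_of_pos hE]
        gcongr
        refine (abs_sub _ _).trans_eq ?_
        rw [abs_mul, abs_mul, abs_of_pos hg0, abs_of_nonneg hr0, abs_of_nonneg (sub_nonneg.2 hg1)]
    _ ≤ phi u * exp (-(u * ε)) * (millsRatio u * (4 * |ε| / u) + millsRatio u * (ε ^ 2 / 2)) := by
        have hM : |millsRatio (u + ε) - millsRatio u| * g ≤ millsRatio u * (4 * |ε| / u) :=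
          (mul_le_of_le_one_right (abs_nonneg _) hg1).trans
            ((abs_millsRatio_add_sub_le hu hε).trans hr)
        exact mul_le_mul_of_nonneg_left (add_le_add hM (mul_le_mul_of_nonneg_left hg hr0)) hE.le
    _ = (4 * |ε| / u + ε ^ 2 / 2) * (Psi u * exp (-(u * ε))) := by
        rw [← millsRatio_mul_phi u]
        ring

/-- perturbation bound for the Gaussian survival function. -/
theorem stmt0 (u ε : ℕ → ℝ) (hu : 0 < ⨅ n, u n)
    (hε : Filter.Tendsto ε Filter.atTop (nhds 0)) :
    ∃ C : ℝ, ∃ N : ℕ, ∀ n ≥ N,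
      |Psi (u n + ε n) - Psi (u n) * Real.exp (-(u n * ε n))| ≤
        C * (|ε n| / u n + ε n ^ 2) * (Psi (u n) * Real.exp (-(u n * ε n))) := by
  have hbdd : BddBelow (range u) := by
    by_contra h
    rw [Real.iInf_of_not_bddBelow h] at hu
    exact hu.false
  obtain ⟨N, hN⟩ := Metric.tendsto_atTop.mp hε _ (half_pos hu)
  refine ⟨4, N, fun n hn => ?_⟩
  have hun : ⨅ n, u n ≤ u n := ciInf_le hbdd n
  have hεn : |ε n| ≤ u n / 2 := by
    have := hN n hn
    rw [Real.dist_0_eq_abs] at this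
    linarith
  refine (abs_Psi_add_sub_le (hu.trans_le hun) hεn).trans
    (mul_le_mul_of_nonneg_right ?_ (mul_nonneg (Psi_nonneg _) (exp_pos _).le))
  rw [mul_add, mul_div_assoc]
  linarith [sq_nonneg (ε n)]
end

section
/- Fix an integer d ≥ 1 and constants 0 < σ₁² ≤ C₁ < ∞. There exists a constant C < ∞, depending only on d, σ₁, and C₁, with the following property: for every symmetric positive definite d×d matrix M with smallest eigenvalue λ := λ_min(M), every symmetric d×d matrix Λ with σ₁²·I ⪯ Λ ⪯ C₁·I, and every real c with 0 ≤ c ≤ λ, one has |√(det(M + cΛ)/det(M)) · exp(−(c/2)·tr((M + cΛ)^{-1} Λ)) − 1| ≤ C·c²/λ². -/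
/-!
Write `M = S * S` with `S = √M` and let `a i` be the eigenvalues of `A = S⁻¹ Λ S⁻¹`. Then
`det (M + cΛ) / det M = ∏ (1 + c a i)` and `tr ((M + cΛ)⁻¹ Λ) = ∑ a i / (1 + c a i)`, so with
`t i = c a i` the quantity inside the absolute value is `exp T - 1` for
`T = ½ ∑ (log (1 + t i) - t i / (1 + t i))`. Conjugating `0 ⪯ Λ ⪯ C₁ I ⪯ (C₁ / λ) M` by `S⁻¹`
gives `0 ≤ t i ≤ C₁ c / λ ≤ C₁`; every summand of `T` lies in `[0, t i ^ 2]`, and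
`exp T - 1 ≤ T exp T` finishes the estimate.
-/

open Matrix

/-- The smallest eigenvalue of a Hermitian (real symmetric) matrix. -/
noncomputable def minEig {d : ℕ} (M : Matrix (Fin d) (Fin d) ℝ) (hM : M.IsHermitian) : ℝ :=
  ⨅ i, hM.eigenvalues i

open scoped MatrixOrder

namespace Real

lemma div_one_add_le_log_one_add {t : ℝ} (ht : -1 < t) : t / (1 + t) ≤ log (1 + t) := by
  have hpos : 0 < 1 + t := by linarith
  calc t / (1 + t) = 1 - (1 + t)⁻¹ := by field_simp; ring
    _ ≤ log (1 + t) := one_sub_inv_le_log_of_pos hpos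

lemma log_one_add_sub_div_one_add_le_sq {t : ℝ} (ht : 0 ≤ t) :
    log (1 + t) - t / (1 + t) ≤ t ^ 2 := by
  have hlog : log (1 + t) ≤ t := by linarith [log_le_sub_one_of_pos (x := 1 + t) (by linarith)]
  have hsub : t - t / (1 + t) = t ^ 2 / (1 + t) := by field_simp; ring
  have hdiv : t ^ 2 / (1 + t) ≤ t ^ 2 := div_le_self (sq_nonneg t) (by linarith)
  linarith

lemma exp_sub_one_le_mul_exp (T : ℝ) : exp T - 1 ≤ T * exp T := by
  have h := add_one_le_exp (-T)
  have hmul : exp (-T) * exp T = 1 := by rw [← exp_add, neg_add_cancel, exp_zero]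
  nlinarith [exp_pos T]

variable {ι : Type*} [Fintype ι]

lemma sqrt_prod_one_add_mul_exp_eq (t : ι → ℝ) (ht : ∀ i, -1 < t i) :
    √(∏ i, (1 + t i)) * exp (-(1 / 2) * ∑ i, t i / (1 + t i)) =
      exp ((∑ i, (log (1 + t i) - t i / (1 + t i))) / 2) := by
  have hpos : ∀ i, 0 < 1 + t i := fun i => by linarith [ht i]
  have hprod : 0 < ∏ i, (1 + t i) := Finset.prod_pos fun i _ => hpos i
  rw [sqrt_eq_rpow, rpow_def_of_pos hprod, log_prod fun i _ => (hpos i).ne', ← exp_add,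
    Finset.sum_sub_distrib]
  ring_nf

lemma abs_sqrt_prod_one_add_mul_exp_sub_one_le (t : ι → ℝ) {K : ℝ} (ht : ∀ i, 0 ≤ t i)
    (htK : ∀ i, t i ≤ K) :
    |√(∏ i, (1 + t i)) * exp (-(1 / 2) * ∑ i, t i / (1 + t i)) - 1| ≤
      Fintype.card ι * K ^ 2 / 2 * exp (Fintype.card ι * K ^ 2 / 2) := by
  rw [sqrt_prod_one_add_mul_exp_eq t fun i => by linarith [ht i]]
  set T := (∑ i, (log (1 + t i) - t i / (1 + t i))) / 2
  have hT0 : 0 ≤ T := by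
    have := Finset.sum_nonneg fun i (_ : i ∈ Finset.univ) =>
      sub_nonneg.mpr (div_one_add_le_log_one_add (t := t i) (by linarith [ht i]))
    positivity
  have hTK : T ≤ Fintype.card ι * K ^ 2 / 2 := by
    have := Finset.sum_le_sum fun i (_ : i ∈ Finset.univ) =>
      (log_one_add_sub_div_one_add_le_sq (ht i)).trans (pow_le_pow_left₀ (ht i) (htK i) 2)
    simp only [Finset.sum_const, Finset.card_univ, nsmul_eq_mul] at this
    exact div_le_div_of_nonneg_right this zero_le_two
  rw [abs_of_nonneg (sub_nonneg.mpr (one_le_exp hT0))]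
  calc exp T - 1 ≤ T * exp T := exp_sub_one_le_mul_exp T
    _ ≤ _ := mul_le_mul hTK (exp_le_exp.mpr hTK) (exp_pos T).le (hT0.trans hTK)

end Real

namespace Matrix.IsHermitian

variable {n 𝕜 : Type*} [Fintype n] [DecidableEq n] [RCLike 𝕜] {A : Matrix n n 𝕜}

lemma det_cfc (hA : A.IsHermitian) (f : ℝ → ℝ) :
    (cfc f A).det = ∏ i, (f (hA.eigenvalues i) : 𝕜) := by
  simp [hA.cfc_eq, IsHermitian.cfc, -Unitary.conjStarAlgAut_apply]

lemma trace_cfc (hA : A.IsHermitian) (f : ℝ → ℝ) :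
    (cfc f A).trace = ∑ i, (f (hA.eigenvalues i) : 𝕜) := by
  rw [hA.cfc_eq, IsHermitian.cfc, Unitary.conjStarAlgAut_apply, trace_mul_cycle,
    Unitary.coe_star_mul_self, one_mul, trace_diagonal]
  rfl

lemma one_add_smul_eq_cfc (hA : A.IsHermitian) (c : ℝ) :
    1 + c • A = cfc (fun x => 1 + c * x) A := by
  rw [cfc_const_add _ _ A, cfc_const_mul_id c A, map_one]

lemma det_one_add_smul (hA : A.IsHermitian) (c : ℝ) :
    (1 + c • A).det = ∏ i, ((1 + c * hA.eigenvalues i : ℝ) : 𝕜) := by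
  rw [hA.one_add_smul_eq_cfc, hA.det_cfc]

lemma trace_inv_one_add_smul_mul (hA : A.IsHermitian) {c : ℝ}
    (hc : ∀ i, 1 + c * hA.eigenvalues i ≠ 0) :
    ((1 + c • A)⁻¹ * A).trace =
      ∑ i, ((hA.eigenvalues i / (1 + c * hA.eigenvalues i) : ℝ) : 𝕜) := by
  have hcont (f : ℝ → ℝ) : ContinuousOn f (spectrum ℝ A) := A.finite_real_spectrum.continuousOn f
  have hspec : ∀ x ∈ spectrum ℝ A, 1 + c * x ≠ 0 := by
    rw [hA.spectrum_real_eq_range_eigenvalues]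
    rintro - ⟨i, rfl⟩
    exact hc i
  rw [hA.one_add_smul_eq_cfc, nonsing_inv_eq_ringInverse, ← cfc_inv _ A hspec (hcont _)]
  conv_lhs => enter [1, 2]; rw [← cfc_id' ℝ A]
  rw [← cfc_mul _ _ A (hcont _) (hcont _), hA.trace_cfc]
  simp [div_eq_inv_mul]

lemma eigenvalues_le_of_le_smul_one (hA : A.IsHermitian) {t : ℝ} (h : A ≤ t • 1) (i : n) :
    hA.eigenvalues i ≤ t := by
  rw [← Algebra.algebraMap_eq_smul_one, le_algebraMap_iff_spectrum_le] at h
  exact h _ (hA.eigenvalues_mem_spectrum_real i)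

end Matrix.IsHermitian

lemma minEig_smul_one_le {d : ℕ} {M : Matrix (Fin d) (Fin d) ℝ} (hM : M.IsHermitian) :
    minEig M hM • 1 ≤ M := by
  rw [← Algebra.algebraMap_eq_smul_one, algebraMap_le_iff_le_spectrum,
    hM.spectrum_real_eq_range_eigenvalues]
  rintro - ⟨i, rfl⟩
  exact ciInf_le (Finite.bddBelow_range _) i

namespace Matrix

variable {n : Type*} [Fintype n] [DecidableEq n]

section Field

variable {K : Type*} [Field K] {S : Matrix n n K}

lemma mul_one_add_smul_inv_mul_mul_inv_mul (hS : IsUnit S) (Λ : Matrix n n K) (c : K) :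
    S * (1 + c • (S⁻¹ * Λ * S⁻¹)) * S = S * S + c • Λ := by
  have hdet := (isUnit_iff_isUnit_det S).mp hS
  rw [Matrix.mul_add, Matrix.add_mul, Matrix.mul_one, Matrix.mul_smul, Matrix.smul_mul,
    ← Matrix.mul_assoc, ← Matrix.mul_assoc, mul_nonsing_inv _ hdet, Matrix.one_mul,
    Matrix.mul_assoc, nonsing_inv_mul _ hdet, Matrix.mul_one]

lemma det_add_smul_div_det (hS : IsUnit S) (Λ : Matrix n n K) (c : K) :
    (S * S + c • Λ).det / (S * S).det = (1 + c • (S⁻¹ * Λ * S⁻¹)).det := by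
  have hdet : S.det ≠ 0 := ((isUnit_iff_isUnit_det S).mp hS).ne_zero
  rw [← mul_one_add_smul_inv_mul_mul_inv_mul hS, det_mul, det_mul, det_mul]
  field_simp

lemma trace_inv_add_smul_mul (hS : IsUnit S) (Λ : Matrix n n K) (c : K) :
    ((S * S + c • Λ)⁻¹ * Λ).trace =
      ((1 + c • (S⁻¹ * Λ * S⁻¹))⁻¹ * (S⁻¹ * Λ * S⁻¹)).trace := by
  rw [← mul_one_add_smul_inv_mul_mul_inv_mul hS, Matrix.mul_inv_rev, Matrix.mul_inv_rev,
    Matrix.mul_assoc, trace_mul_comm, Matrix.mul_assoc, Matrix.mul_assoc, Matrix.mul_assoc]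

end Field

lemma sqrt_det_add_smul_div_det_mul_exp_trace {S Λ : Matrix n n ℝ} (hS : IsUnit S)
    (hA : (S⁻¹ * Λ * S⁻¹).IsHermitian) {c : ℝ} (hc : ∀ i, -1 < c * hA.eigenvalues i) :
    √((S * S + c • Λ).det / (S * S).det) *
        Real.exp (-(c / 2) * ((S * S + c • Λ)⁻¹ * Λ).trace) =
      √(∏ i, (1 + c * hA.eigenvalues i)) *
        Real.exp (-(1 / 2) * ∑ i, c * hA.eigenvalues i / (1 + c * hA.eigenvalues i)) := by
  have hne i : 1 + c * hA.eigenvalues i ≠ 0 := by linarith [hc i]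
  rw [det_add_smul_div_det hS, hA.det_one_add_smul, trace_inv_add_smul_mul hS,
    hA.trace_inv_one_add_smul_mul hne]
  simp only [RCLike.ofReal_real_eq_id, id, Finset.mul_sum, neg_mul]
  congr 3
  ext i
  ring

lemma IsHermitian.eigenvalues_inv_mul_mul_inv_mem_Icc {𝕜 : Type*} [RCLike 𝕜]
    {S Λ : Matrix n n 𝕜}
    (hS : S.IsHermitian) (hSu : IsUnit S) (hA : (S⁻¹ * Λ * S⁻¹).IsHermitian) {μ C : ℝ}
    (hμ : 0 < μ) (hC : 0 ≤ C) (hμS : μ • 1 ≤ S * S) (hΛ0 : 0 ≤ Λ) (hΛC : Λ ≤ C • 1) (i : n) :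
    hA.eigenvalues i ∈ Set.Icc 0 (C / μ) := by
  have hdet := (isUnit_iff_isUnit_det S).mp hSu
  have hSS : S⁻¹ * (S * S) * S⁻¹ = 1 := by
    rw [← Matrix.mul_assoc, nonsing_inv_mul _ hdet, Matrix.one_mul, mul_nonsing_inv _ hdet]
  have hΛS : Λ ≤ (C / μ) • (S * S) :=
    calc Λ ≤ C • 1 := hΛC
      _ = (C / μ) • μ • (1 : Matrix n n 𝕜) := by rw [smul_smul, div_mul_cancel₀ _ hμ.ne']
      _ ≤ (C / μ) • (S * S) := smul_le_smul_of_nonneg_left hμS (by positivity)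
  have hA1 : S⁻¹ * Λ * S⁻¹ ≤ (C / μ) • 1 := by
    simpa only [Matrix.mul_smul, Matrix.smul_mul, hSS] using
      hS.inv.isSelfAdjoint.conjugate_le_conjugate hΛS
  exact ⟨(hS.inv.isSelfAdjoint.conjugate_nonneg hΛ0).posSemidef.eigenvalues_nonneg i,
    hA.eigenvalues_le_of_le_smul_one hA1 i⟩

end Matrix

theorem stmt7_general (d : ℕ) (σ1sq C₁ : ℝ) (hσ : 0 < σ1sq) (hC₁ : σ1sq ≤ C₁) :
    ∃ C : ℝ, ∀ (M : Matrix (Fin d) (Fin d) ℝ) (hM : M.PosDef)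
      (Λ : Matrix (Fin d) (Fin d) ℝ), Λ.IsHermitian →
      (Λ - σ1sq • (1 : Matrix (Fin d) (Fin d) ℝ)).PosSemidef →
      (C₁ • (1 : Matrix (Fin d) (Fin d) ℝ) - Λ).PosSemidef →
      ∀ c : ℝ, 0 ≤ c → c ≤ minEig M hM.isHermitian →
        |Real.sqrt ((M + c • Λ).det / M.det) *
            Real.exp (-(c / 2) * ((M + c • Λ)⁻¹ * Λ).trace) - 1| ≤
          C * c ^ 2 / (minEig M hM.isHermitian) ^ 2 := by
  refine ⟨d * C₁ ^ 2 / 2 * Real.exp (d * C₁ ^ 2 / 2), fun M hM Λ hΛ hΛlo hΛhi c hc0 hcμ => ?_⟩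
  have hμM := minEig_smul_one_le hM.isHermitian
  set μ := minEig M hM.isHermitian
  rcases hc0.eq_or_lt with rfl | hc
  · simp [hM.det_pos.ne']
  have hμ : 0 < μ := hc.trans_le hcμ
  have hC₁0 : 0 ≤ C₁ := hσ.le.trans hC₁
  have hΛ0 : 0 ≤ Λ := (smul_nonneg hσ.le zero_le_one).trans (le_iff.mpr hΛlo)
  set S := CFC.sqrt M
  have hSS : S * S = M := CFC.sqrt_mul_sqrt_self M hM.posSemidef.nonneg
  have hS : IsUnit S := isUnit_of_mul_isUnit_left (hSS ▸ hM.isUnit)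
  have hSh : S.IsHermitian := (CFC.sqrt_nonneg M).posSemidef.isHermitian
  have hA : (S⁻¹ * Λ * S⁻¹).IsHermitian :=
    hΛ.isSelfAdjoint.conjugate_self hSh.inv.isSelfAdjoint
  have ht i : c * hA.eigenvalues i ∈ Set.Icc 0 (C₁ * c / μ) := by
    obtain ⟨h0, h1⟩ := hSh.eigenvalues_inv_mul_mul_inv_mem_Icc hS hA hμ hC₁0 (hSS ▸ hμM) hΛ0
      (le_iff.mpr hΛhi) i
    exact ⟨mul_nonneg hc.le h0, by rw [mul_comm C₁, mul_div_assoc]; gcongr⟩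
  rw [← hSS, sqrt_det_add_smul_div_det_mul_exp_trace hS hA fun i => by linarith [(ht i).1]]
  refine (Real.abs_sqrt_prod_one_add_mul_exp_sub_one_le _ (ht · |>.1) (ht · |>.2)).trans ?_
  have hK : C₁ * c / μ ≤ C₁ := by
    rw [mul_div_assoc]
    exact mul_le_of_le_one_right hC₁0 ((div_le_one hμ).mpr hcμ)
  rw [Fintype.card_fin]
  calc (d : ℝ) * (C₁ * c / μ) ^ 2 / 2 * Real.exp (d * (C₁ * c / μ) ^ 2 / 2)
      = d * C₁ ^ 2 / 2 * Real.exp (d * (C₁ * c / μ) ^ 2 / 2) * c ^ 2 / μ ^ 2 := by ring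
    _ ≤ d * C₁ ^ 2 / 2 * Real.exp (d * C₁ ^ 2 / 2) * c ^ 2 / μ ^ 2 := by gcongr

/-- second-order accuracy of the determinant/trace correction: for `M` positive
definite with smallest eigenvalue `λ`, `σ₁²·I ⪯ Λ ⪯ C₁·I` symmetric, and `0 ≤ c ≤ λ`,
`|√(det(M + cΛ)/det M)·exp(−(c/2)·tr((M + cΛ)⁻¹Λ)) − 1| ≤ C·c²/λ²`. -/
theorem stmt7 (d : ℕ) (hd : 1 ≤ d) (σ1sq C₁ : ℝ) (hσ : 0 < σ1sq) (hC₁ : σ1sq ≤ C₁) :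
    ∃ C : ℝ, ∀ (M : Matrix (Fin d) (Fin d) ℝ) (hM : M.PosDef)
      (Λ : Matrix (Fin d) (Fin d) ℝ), Λ.IsHermitian →
      (Λ - σ1sq • (1 : Matrix (Fin d) (Fin d) ℝ)).PosSemidef →
      (C₁ • (1 : Matrix (Fin d) (Fin d) ℝ) - Λ).PosSemidef →
      ∀ c : ℝ, 0 ≤ c → c ≤ minEig M hM.isHermitian →
        |Real.sqrt ((M + c • Λ).det / M.det) *
            Real.exp (-(c / 2) * ((M + c • Λ)⁻¹ * Λ).trace) - 1| ≤
          C * c ^ 2 / (minEig M hM.isHermitian) ^ 2 :=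
  stmt7_general d σ1sq C₁ hσ hC₁
end
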